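/- Let R be a finite principal left ideal ring, L a linear extension of the poset of left ideals of R ordered by inclusion, and < a total order on R obtained by declaring x < y whenever Ry <_L Rx, with an arbitrary total order within each set of generators of a fixed left ideal. Then < is respectful, and moreover for nonzero x, y with Rx ⊋ Ry one has x < uy for all units u. -/

import Mathlib

theorem lt_unit_mul_of_span_lt {R : Type*} [Ring R]
    (Lext : LinearOrder (Ideal R))
    (hLext : ∀ I J : Ideal R, I < J → Lext.lt I J)
    (L : LinearOrder R)
    (hrespects : ∀ x y : R, x ≠ 0 → y ≠ 0 →
      Lext.lt (Ideal.span {y}) (Ideal.span {x}) → L.lt x y)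
    {x y : R} (hx : x ≠ 0) (hy : y ≠ 0) (hlt : Ideal.span {y} < Ideal.span {x}) (u : Rˣ) :
    L.lt x ((u : R) * y) := by
  have huy : (u : R) * y ≠ 0 := (Units.mul_right_eq_zero u).not.mpr hy
  refine hrespects x _ hx huy ?_
  rw [Ideal.span_singleton_mul_left_unit u.isUnit]
  exact hLext _ _ hlt

theorem order_respecting_linear_extension_is_respectful {R : Type*} [Ring R]
    (Lext : LinearOrder (Ideal R))
    (hLext : ∀ I J : Ideal R, I < J → Lext.lt I J)
    (L : LinearOrder R)
    (hrespects : ∀ x y : R, x ≠ 0 → y ≠ 0 →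
      Lext.lt (Ideal.span {y}) (Ideal.span {x}) → L.lt x y) :
    (∀ x y : R, x ≠ 0 → y ≠ 0 → Ideal.span {y} < Ideal.span {x} →
      ∃ α : Rˣ, ∀ u : Rˣ, L.lt ((α : R) * x) ((u : R) * y)) ∧
    (∀ x y : R, x ≠ 0 → y ≠ 0 → Ideal.span {y} < Ideal.span {x} →
      ∀ u : Rˣ, L.lt x ((u : R) * y)) := by
  refine ⟨fun x y hx hy hlt ↦ ⟨1, fun u ↦ ?_⟩,
    fun x y hx hy hlt ↦ lt_unit_mul_of_span_lt Lext hLext L hrespects hx hy hlt⟩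
  simpa only [Units.val_one, one_mul] using
    lt_unit_mul_of_span_lt Lext hLext L hrespects hx hy hlt u
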